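/- The map ι: x ↦ x + v(x)·d±(x) on the intersection of the hyperboloid H: Ax1²+Bx2²+Cx3²+D = 0 (ABCD ≥ 0) and the cylinder C: αx1²+βx3²+γ = 0 is an involution: ι(ι(x)) = x, where d±(x) = (ABCx1x3 ∓ √(ABCD)Bx2, ABCx2x3 ± √(ABCD)Ax1, −AB(Ax1²+Bx2²)) and v(x) = −2(α·(d±(x))1·x1 + β·(d±(x))3·x3)/(α·(d±(x))1² + β·(d±(x))3²). -/

import Mathlib

/-!
For `x ∈ H` the line through `x` in direction `d±(x)` is a ruling of `H`, and `d±` stays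
proportional to `d±(x)` along it (`dvec_add_smul_dvec`). The map `ι` moves `x` along this line
to the other end of its chord of the quadric `α x₁² + β x₃² = const`; since rescaling the
direction does not change the line, applying `ι` once more runs back along the same chord to `x`.
-/

/-- Ruling direction `d±(x)` with `s = ±√(ABCD)`. -/
noncomputable def dvec (A B C s : ℝ) (x : ℝ × ℝ × ℝ) : ℝ × ℝ × ℝ :=
  (A*B*C*x.1*x.2.2 - s*B*x.2.1,
   A*B*C*x.2.1*x.2.2 + s*A*x.1,
   -(A*B)*(A*x.1^2 + B*x.2.1^2))

/-- The step length `v(x)` for the cylinder `α x₁² + β x₃² + γ = 0`. -/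
noncomputable def vstep (A B C s α β : ℝ) (x : ℝ × ℝ × ℝ) : ℝ :=
  -2 * (α*(dvec A B C s x).1*x.1 + β*(dvec A B C s x).2.2*x.2.2) /
    (α*(dvec A B C s x).1^2 + β*(dvec A B C s x).2.2^2)

/-- The involution `ι : x ↦ x + v(x)·d±(x)`. -/
noncomputable def iotaMap (A B C s α β : ℝ) (x : ℝ × ℝ × ℝ) : ℝ × ℝ × ℝ :=
  (x.1 + vstep A B C s α β x * (dvec A B C s x).1,
   x.2.1 + vstep A B C s α β x * (dvec A B C s x).2.1,
   x.2.2 + vstep A B C s α β x * (dvec A B C s x).2.2)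

section Chord

variable {K V : Type*} [Field K] [AddCommGroup V] [Module K V]

/-- For symmetric `b`, `x + chordParam b d x • d` is the second intersection of the line
`x + t • d` with the quadric `b z z = b x x`. -/
noncomputable def chordParam (b : LinearMap.BilinForm K V) (d x : V) : K :=
  -2 * b d x / b d d

noncomputable def chordMap (b : LinearMap.BilinForm K V) (d x : V) : V :=
  x + chordParam b d x • d

theorem chordParam_smul_chordMap (b : LinearMap.BilinForm K V) (d x : V) {c : K}
    (hc : c ≠ 0) (hd : b d d ≠ 0) :
    chordParam b (c • d) (chordMap b d x) = -(chordParam b d x / c) := by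
  simp only [chordParam, chordMap, map_add, map_smul, LinearMap.smul_apply, smul_eq_mul]
  field_simp
  ring

theorem chordMap_smul_chordMap (b : LinearMap.BilinForm K V) (d x : V) {c : K}
    (h : b (c • d) (c • d) ≠ 0) :
    chordMap b (c • d) (chordMap b d x) = x := by
  have hcd : c * (c * b d d) ≠ 0 := by simpa using h
  have hc : c ≠ 0 := left_ne_zero_of_mul hcd
  have hd : b d d ≠ 0 := right_ne_zero_of_mul (right_ne_zero_of_mul hcd)
  rw [chordMap, chordParam_smul_chordMap b d x hc hd, chordMap, smul_smul, neg_mul,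
    div_mul_cancel₀ _ hc, neg_smul, add_neg_cancel_right]

end Chord

def cylinderForm (α β : ℝ) : LinearMap.BilinForm ℝ (ℝ × ℝ × ℝ) :=
  LinearMap.mk₂ ℝ (fun u w => α * u.1 * w.1 + β * u.2.2 * w.2.2)
    (fun _ _ _ => by simp only [Prod.fst_add, Prod.snd_add]; ring)
    (fun _ _ _ => by simp only [Prod.smul_fst, Prod.smul_snd, smul_eq_mul]; ring)
    (fun _ _ _ => by simp only [Prod.fst_add, Prod.snd_add]; ring)
    (fun _ _ _ => by simp only [Prod.smul_fst, Prod.smul_snd, smul_eq_mul]; ring)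

theorem cylinderForm_apply_self (α β : ℝ) (u : ℝ × ℝ × ℝ) :
    cylinderForm α β u u = α * u.1 ^ 2 + β * u.2.2 ^ 2 := by
  simp only [cylinderForm, LinearMap.mk₂_apply]; ring

theorem iotaMap_eq_chordMap (A B C s α β : ℝ) (x : ℝ × ℝ × ℝ) :
    iotaMap A B C s α β x = chordMap (cylinderForm α β) (dvec A B C s x) x := by
  simp only [iotaMap, vstep, chordMap, chordParam, cylinderForm_apply_self]
  rfl

theorem dvec_add_smul_dvec {A B C D s : ℝ} {x : ℝ × ℝ × ℝ} (hs : s ^ 2 = A * B * C * D)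
    (hH : A * x.1 ^ 2 + B * x.2.1 ^ 2 + C * x.2.2 ^ 2 + D = 0) (t : ℝ) :
    dvec A B C s (x + t • dvec A B C s x) =
      (1 + 2 * A * B * C * x.2.2 * t + A * B * C * (dvec A B C s x).2.2 * t ^ 2) •
        dvec A B C s x := by
  obtain ⟨x₁, x₂, x₃⟩ := x
  have hruling : A * B * C * (A * x₁ ^ 2 + B * x₂ ^ 2 + C * x₃ ^ 2) + s ^ 2 = 0 := by
    linear_combination A * B * C * hH + hs
  simp only [dvec, Prod.smul_mk, Prod.mk_add_mk, smul_eq_mul, Prod.mk.injEq]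
  refine ⟨?_, ?_, ?_⟩
  · linear_combination -(A * B * x₁ * t) * hruling
  · linear_combination -(A * B * x₂ * t) * hruling
  · linear_combination -(A * B) ^ 2 * (A * x₁ ^ 2 + B * x₂ ^ 2) * t ^ 2 * hruling

theorem stmt_7_general (A B C D α β s : ℝ) (x : ℝ × ℝ × ℝ)
    (hs : s^2 = A*B*C*D)
    (hH : A*x.1^2 + B*x.2.1^2 + C*x.2.2^2 + D = 0)
    (hden' : α*(dvec A B C s (iotaMap A B C s α β x)).1^2
        + β*(dvec A B C s (iotaMap A B C s α β x)).2.2^2 ≠ 0) :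
    iotaMap A B C s α β (iotaMap A B C s α β x) = x := by
  set b := cylinderForm α β
  set d := dvec A B C s x
  have hline : dvec A B C s (chordMap b d x) =
      (1 + 2 * A * B * C * x.2.2 * chordParam b d x
        + A * B * C * d.2.2 * chordParam b d x ^ 2) • d :=
    dvec_add_smul_dvec hs hH _
  rw [← cylinderForm_apply_self, iotaMap_eq_chordMap, hline] at hden'
  rw [iotaMap_eq_chordMap, iotaMap_eq_chordMap, hline]
  exact chordMap_smul_chordMap _ _ x hden'

theorem stmt_7 (A B C D α β γ s : ℝ) (x : ℝ × ℝ × ℝ)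
    (hABCD : A*B*C*D ≥ 0) (hs : s^2 = A*B*C*D)
    (hH : A*x.1^2 + B*x.2.1^2 + C*x.2.2^2 + D = 0)
    (hC : α*x.1^2 + β*x.2.2^2 + γ = 0)
    (hden : α*(dvec A B C s x).1^2 + β*(dvec A B C s x).2.2^2 ≠ 0)
    (hden' : α*(dvec A B C s (iotaMap A B C s α β x)).1^2
        + β*(dvec A B C s (iotaMap A B C s α β x)).2.2^2 ≠ 0) :
    iotaMap A B C s α β (iotaMap A B C s α β x) = x :=
  stmt_7_general A B C D α β s x hs hH hden'
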